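/- arXiv:1910.11531 — 4 statements merged into one kernel-verified Lean document; each statement's English description precedes it below -/
import Mathlib

section
/- Let E, F be real Banach spaces, U ⊆ E open, f : U → F differentiable on U, and x₀ ∈ U. If Df : U → L(E,F) is continuous at x₀, then there exists a two-variable slope function Φ : U × U → L(E,F) of f (for each x, Φ(x,·) is a slope function at x) which is jointly continuous at (x₀, x₀). -/
/-!
Take `Φ(x, y) = f'(x) + ℓ ⊗ r(x, y) / ‖y - x‖`, where `r(x, y) = f y - f x - f'(x)(y - x)` and
`ℓ` is a Hahn–Banach norming functional of `y - x`. Then `‖Φ(x, y) - f'(x)‖ ≤ ‖r(x, y)‖ / ‖y - x‖`,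
which tends to `0` as `y → x` by differentiability at `x`. Continuity of `f'` at `x₀` makes `f`
strictly differentiable there (mean value inequality), and that is exactly the statement that
`‖f y - f x - f'(x₀)(y - x)‖ / ‖y - x‖ → 0` as `(x, y) → (x₀, x₀)`, which gives joint continuity.
-/

open Filter Topology

noncomputable section

variable {𝕜 E F : Type*} [RCLike 𝕜] [NormedAddCommGroup E] [NormedSpace 𝕜 E]
  [NormedAddCommGroup F] [NormedSpace 𝕜 F]

-- At `y = x` the functional is arbitrary, but the remainder vanishes.
variable (𝕜) in
def slopeCLM (f : E → F) (f' : E → E →L[𝕜] F) (x y : E) : E →L[𝕜] F :=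
  (exists_dual_vector'' 𝕜 (y - x)).choose.smulRight
      ((‖y - x‖⁻¹ : 𝕜) • (f y - f x - f' x (y - x))) + f' x

variable {f : E → F} {f' : E → E →L[𝕜] F}

theorem slopeCLM_apply_sub (x y : E) : f y = f x + slopeCLM 𝕜 f f' x y (y - x) := by
  obtain ⟨-, hℓ⟩ := (exists_dual_vector'' 𝕜 (y - x)).choose_spec
  rcases eq_or_ne y x with rfl | hxy
  · simp
  · have : (‖y - x‖ : 𝕜) ≠ 0 := by simpa [sub_eq_zero] using hxy
    simp only [slopeCLM, add_apply, ContinuousLinearMap.smulRight_apply, hℓ,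
      smul_smul, mul_inv_cancel₀ this, one_smul]
    abel

@[simp]
theorem slopeCLM_self (x : E) : slopeCLM 𝕜 f f' x x = f' x := by
  simp [slopeCLM]

theorem norm_slopeCLM_sub_le (x y : E) :
    ‖slopeCLM 𝕜 f f' x y - f' x‖ ≤ ‖f y - f x - f' x (y - x)‖ / ‖y - x‖ := by
  obtain ⟨hℓ, -⟩ := (exists_dual_vector'' 𝕜 (y - x)).choose_spec
  rw [slopeCLM, add_sub_cancel_right, ContinuousLinearMap.norm_smulRight_apply, norm_smul,
    norm_inv, RCLike.norm_ofReal, abs_norm, inv_mul_eq_div]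
  exact mul_le_of_le_one_left (by positivity) hℓ

theorem norm_slopeCLM_sub_le' (L : E →L[𝕜] F) (x y : E) :
    ‖slopeCLM 𝕜 f f' x y - L‖ ≤ ‖f y - f x - L (y - x)‖ / ‖y - x‖ + 2 * ‖f' x - L‖ := by
  have hrem : f y - f x - f' x (y - x) = (f y - f x - L (y - x)) - (f' x - L) (y - x) := by
    simp only [sub_apply]; abel
  calc ‖slopeCLM 𝕜 f f' x y - L‖
      ≤ ‖slopeCLM 𝕜 f f' x y - f' x‖ + ‖f' x - L‖ := norm_sub_le_norm_sub_add_norm_sub _ _ _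
    _ ≤ ‖f y - f x - L (y - x)‖ / ‖y - x‖ + ‖(f' x - L) (y - x)‖ / ‖y - x‖ + ‖f' x - L‖ := by
      gcongr
      refine (norm_slopeCLM_sub_le x y).trans ?_
      rw [hrem, ← add_div]
      gcongr
      exact norm_sub_le _ _
    _ ≤ ‖f y - f x - L (y - x)‖ / ‖y - x‖ + 2 * ‖f' x - L‖ := by
      linarith [(f' x - L).ratio_le_opNorm (y - x)]

theorem continuousAt_slopeCLM {x : E} (hf : HasFDerivAt f (f' x) x) :
    ContinuousAt (slopeCLM 𝕜 f f' x) x := by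
  rw [ContinuousAt, slopeCLM_self, tendsto_iff_norm_sub_tendsto_zero]
  exact squeeze_zero (fun _ ↦ norm_nonneg _) (norm_slopeCLM_sub_le x)
    hf.isLittleO.norm_norm.tendsto_div_nhds_zero

theorem tendsto_slopeCLM_of_hasStrictFDerivAt {x₀ : E} (hf : HasStrictFDerivAt f (f' x₀) x₀)
    (hf' : ContinuousAt f' x₀) :
    Tendsto (fun p : E × E ↦ slopeCLM 𝕜 f f' p.1 p.2) (𝓝 (x₀, x₀)) (𝓝 (f' x₀)) := by
  have hrem : Tendsto (fun p : E × E ↦ ‖f p.2 - f p.1 - f' x₀ (p.2 - p.1)‖ / ‖p.2 - p.1‖)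
      (𝓝 (x₀, x₀)) (𝓝 0) := by
    refine hf.isLittleO.norm_norm.tendsto_div_nhds_zero.congr fun p ↦ ?_
    rw [← norm_neg (p.1 - p.2), ← norm_neg (f p.1 - f p.2 - _)]
    simp only [neg_sub, map_sub]
    congr 2; abel
  have hder : Tendsto (fun p : E × E ↦ ‖f' p.1 - f' x₀‖) (𝓝 (x₀, x₀)) (𝓝 0) :=
    tendsto_iff_norm_sub_tendsto_zero.1 (hf'.tendsto.comp continuousAt_fst)
  rw [tendsto_iff_norm_sub_tendsto_zero]
  refine squeeze_zero (fun _ ↦ norm_nonneg _) (fun p ↦ norm_slopeCLM_sub_le' _ p.1 p.2) ?_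
  simpa using hrem.add (hder.const_mul 2)

end

theorem stmt_11_general {E F : Type*} [NormedAddCommGroup E] [NormedSpace ℝ E]
    [NormedAddCommGroup F] [NormedSpace ℝ F]
    (U : Set E) (hU : IsOpen U) (f : E → F) (f' : E → (E →L[ℝ] F))
    (hf : ∀ c ∈ U, HasFDerivAt f (f' c) c)
    (x₀ : E) (hx₀ : x₀ ∈ U)
    (hcont : ContinuousAt f' x₀) :
    ∃ Φ : E → E → (E →L[ℝ] F),
      (∀ x ∈ U, ∀ y ∈ U, f y = f x + Φ x y (y - x)) ∧
      (∀ x ∈ U, ContinuousAt (Φ x) x) ∧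
      (∀ x ∈ U, Φ x x = f' x) ∧
      Tendsto (fun p : E × E => Φ p.1 p.2) (𝓝 (x₀, x₀)) (𝓝 (f' x₀)) := by
  have hstrict : HasStrictFDerivAt f (f' x₀) x₀ :=
    hasStrictFDerivAt_of_hasFDerivAt_of_continuousAt
      (eventually_of_mem (hU.mem_nhds hx₀) hf) hcont
  exact ⟨slopeCLM ℝ f f', fun x _ y _ ↦ slopeCLM_apply_sub x y,
    fun x hx ↦ continuousAt_slopeCLM (hf x hx), fun x _ ↦ slopeCLM_self x,
    tendsto_slopeCLM_of_hasStrictFDerivAt hstrict hcont⟩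

/-- If `Df` is continuous at `x₀`, then there exists a two-variable slope
function of `f` that is jointly continuous at `(x₀, x₀)` (with limit `Df(x₀)`). -/
theorem stmt_11 {E F : Type*} [NormedAddCommGroup E] [NormedSpace ℝ E] [CompleteSpace E]
    [NormedAddCommGroup F] [NormedSpace ℝ F] [CompleteSpace F]
    (U : Set E) (hU : IsOpen U) (f : E → F) (f' : E → (E →L[ℝ] F))
    (hf : ∀ c ∈ U, HasFDerivAt f (f' c) c)
    (x₀ : E) (hx₀ : x₀ ∈ U)
    (hcont : ContinuousAt f' x₀) :
    ∃ Φ : E → E → (E →L[ℝ] F),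
      (∀ x ∈ U, ∀ y ∈ U, f y = f x + Φ x y (y - x)) ∧
      (∀ x ∈ U, ContinuousAt (Φ x) x) ∧
      (∀ x ∈ U, Φ x x = f' x) ∧
      Tendsto (fun p : E × E => Φ p.1 p.2) (𝓝 (x₀, x₀)) (𝓝 (f' x₀)) :=
  stmt_11_general U hU f f' hf x₀ hx₀ hcont
end

section
/- Under the hypotheses of the Schwarz lemma proof: for f differentiable near x with Df differentiable at x, and u, v ∈ E fixed, the second-order difference quotient converges: lim_{s→0+} (f(x+su+sv) - f(x+sv) - f(x+su) + f(x))/s² = D²f(x)[u,v]. -/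
/-! Along the segment from `x + h • v` to `x + h • v + h • w`, the mean value inequality applied
to `f - h • f'' v - …` gives the second-order expansion of `f (x + h • v + h • w) - f (x + h • v)`
(`Convex.taylor_approx_two_segment`, for directions pointing into a convex set); shrinking the
directions into a ball inside `U` and rescaling `h` makes it hold for all directions. The second
difference is the expansion for `(u, v)` minus the one for `(0, v)`: the `f' x v` and `f'' v v`
terms cancel, leaving `h ^ 2 • f'' u v + o(h ^ 2)`. -/

open Filter Topology Asymptotics

theorem isLittleO_sq_of_comp_const_mul {F : Type*} [NormedAddCommGroup F] {φ : ℝ → F} {c : ℝ}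
    (hc : 0 < c) (hφ : (fun h => φ (c * h)) =o[𝓝[>] 0] fun h => h ^ 2) :
    φ =o[𝓝[>] 0] fun h => h ^ 2 := by
  have hmap : Tendsto (c⁻¹ * ·) (𝓝[>] 0) (𝓝[>] 0) :=
    tendsto_iff_comap.2 (comap_mulLeft_nhdsGT_zero (inv_pos.2 hc)).ge
  have hsq : (fun h : ℝ => (c⁻¹ * h) ^ 2) =O[𝓝[>] 0] fun h => h ^ 2 := by
    simpa only [mul_pow] using (isBigO_refl (fun h : ℝ => h ^ 2) _).const_mul_left (c⁻¹ ^ 2)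
  simpa only [Function.comp_def, mul_inv_cancel_left₀ hc.ne'] using
    (hφ.comp_tendsto hmap).trans_isBigO hsq

theorem IsOpen.taylor_approx_two_segment {E F : Type*} [NormedAddCommGroup E] [NormedSpace ℝ E]
    [NormedAddCommGroup F] [NormedSpace ℝ F] {U : Set E} (hU : IsOpen U) {f : E → F}
    {f' : E → E →L[ℝ] F} {f'' : E →L[ℝ] E →L[ℝ] F} {x : E} (hx : x ∈ U)
    (hf : ∀ y ∈ U, HasFDerivAt f (f' y) y) (hf'' : HasFDerivAt f' f'' x) (v w : E) :
    (fun h : ℝ => f (x + h • v + h • w)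
        - f (x + h • v) - h • f' x w - h ^ 2 • f'' v w - (h ^ 2 / 2) • f'' w w) =o[𝓝[>] 0]
      fun h => h ^ 2 := by
  obtain ⟨r, hr, hball⟩ := Metric.isOpen_iff.1 hU x hx
  have hclose : ∀ᶠ t in 𝓝[>] (0 : ℝ),
      x + t • v ∈ Metric.ball x r ∧ x + t • v + t • w ∈ Metric.ball x r ∧ 0 < t := by
    have hcont : ∀ a b : E, Tendsto (fun t : ℝ => x + t • a + t • b) (𝓝 0) (𝓝 x) := fun a b => by
      simpa using ((by fun_prop : Continuous fun t : ℝ => x + t • a + t • b).tendsto 0)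
    have hball_nhds : Metric.ball x r ∈ 𝓝 x := Metric.ball_mem_nhds x hr
    refine ((hcont v 0).eventually hball_nhds).and ((hcont v w).eventually hball_nhds)
      |>.filter_mono nhdsWithin_le_nhds |>.and self_mem_nhdsWithin |>.mono ?_
    rintro t ⟨⟨hv, hvw⟩, ht⟩
    exact ⟨by simpa using hv, hvw, ht⟩
  obtain ⟨t, hv, hvw, ht⟩ := hclose.exists
  have hball_int : interior (Metric.ball x r) = Metric.ball x r := Metric.isOpen_ball.interior_eq
  have hscaled := (convex_ball x r).taylor_approx_two_segment
    (fun y hy => hf y (hball (hball_int ▸ hy))) (Metric.mem_ball_self hr)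
    hf''.hasFDerivWithinAt (hball_int ▸ hv) (hball_int ▸ hvw)
  refine isLittleO_sq_of_comp_const_mul ht (hscaled.congr_left fun h => ?_)
  simp only [map_smul, smul_apply, smul_smul, mul_comm t h, mul_pow, ← sq,
    div_mul_eq_mul_div]

theorem stmt_14_general {E F : Type*} [NormedAddCommGroup E] [NormedSpace ℝ E]
    [NormedAddCommGroup F] [NormedSpace ℝ F]
    (U : Set E) (hU : IsOpen U) (f : E → F) (f' : E → (E →L[ℝ] F))
    (x : E) (hx : x ∈ U)
    (hf : ∀ y ∈ U, HasFDerivAt f (f' y) y)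
    (f'' : E →L[ℝ] (E →L[ℝ] F)) (hf'' : HasFDerivAt f' f'' x)
    (u v : E) :
    Tendsto
      (fun s : ℝ => (s ^ 2)⁻¹ • (f (x + s • u + s • v) - f (x + s • v) - f (x + s • u) + f x))
      (𝓝[>] 0) (𝓝 (f'' u v)) := by
  have hrect : (fun s : ℝ => (f (x + s • u + s • v) - f (x + s • v) - f (x + s • u) + f x)
      - s ^ 2 • f'' u v) =o[𝓝[>] 0] fun s => s ^ 2 := by
    have hu := hU.taylor_approx_two_segment hx hf hf'' u v
    have h0 := hU.taylor_approx_two_segment hx hf hf'' 0 v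
    simp only [smul_zero, add_zero, map_zero, zero_apply, sub_zero] at h0
    exact (hu.sub h0).congr_left fun s => by abel
  have hlim := hrect.tendsto_inv_smul_nhds_zero.add_const (f'' u v)
  rw [zero_add] at hlim
  refine hlim.congr' ?_
  filter_upwards [self_mem_nhdsWithin] with s hs
  rw [smul_sub, smul_smul, inv_mul_cancel₀ (pow_ne_zero 2 (ne_of_gt hs)), one_smul,
    sub_add_cancel]

/-- Convergence of the second-order difference quotient to `D²f(x)[u,v]`. -/
theorem stmt_14 {E F : Type*} [NormedAddCommGroup E] [NormedSpace ℝ E] [CompleteSpace E]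
    [NormedAddCommGroup F] [NormedSpace ℝ F] [CompleteSpace F]
    (U : Set E) (hU : IsOpen U) (f : E → F) (f' : E → (E →L[ℝ] F))
    (x : E) (hx : x ∈ U)
    (hf : ∀ y ∈ U, HasFDerivAt f (f' y) y)
    (f'' : E →L[ℝ] (E →L[ℝ] F)) (hf'' : HasFDerivAt f' f'' x)
    (u v : E) :
    Tendsto
      (fun s : ℝ => (s ^ 2)⁻¹ • (f (x + s • u + s • v) - f (x + s • v) - f (x + s • u) + f x))
      (𝓝[>] 0) (𝓝 (f'' u v)) :=
  stmt_14_general U hU f f' x hx hf f'' hf'' u v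
end

section
/- Differentiable dependence of fixed points: Let E, F be Banach spaces, U ⊆ E and Λ ⊆ F open nonempty, and f : closure(U) × Λ → closure(U) continuously differentiable and a uniform contraction with constant L ∈ (0,1) in the first variable. For each μ ∈ Λ let x_μ ∈ closure(U) be the unique fixed point of f(·,μ). Then the map μ ↦ x_μ is continuously differentiable on Λ, with derivative at λ given by D(x_·)(λ) = [I - D_x f(x_λ, λ)]⁻¹ ∘ D_λ f(x_λ, λ), where I - D_x f(x_λ,λ) is invertible since ‖D_x f(x_λ,λ)‖ ≤ L < 1. -/
open Set Filter Topology ContinuousLinearMap Asymptotics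

/-!
Writing `A = D_x g(x_λ, λ)` and `B = D_λ g(x_λ, λ)`, a contraction with constant `L` has
`‖A‖ ≤ L` (first on `U`, where `g(·, λ)` is `L`-Lipschitz near each point, then on `closure U`
by continuity of `Dg`), so `1 - A` is invertible by the Neumann series. Comparing fixed points,
`(1 - L) ‖x_μ - x_λ‖ ≤ ‖g(x_λ, μ) - g(x_λ, λ)‖ = O(‖μ - λ‖)`. Feeding this into the first-order
expansion of `g` at `(x_λ, λ)` gives
`(1 - A)(x_μ - x_λ) - B (μ - λ) = o(‖μ - λ‖)`, i.e. `D x(λ) = (1 - A)⁻¹ B`, and this is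
continuous in `λ` because `Dg`, `x` and inversion of units are.
-/

section Normed

variable {𝕜 : Type*} [NontriviallyNormedField 𝕜]
  {E F G : Type*} [NormedAddCommGroup E] [NormedSpace 𝕜 E] [NormedAddCommGroup F]
  [NormedSpace 𝕜 F] [NormedAddCommGroup G] [NormedSpace 𝕜 G]

theorem norm_fderiv_comp_inl_le_of_lipschitz {g : E × F → G} {W : Set (E × F)} (hW : IsOpen W)
    (hg : ContDiffOn 𝕜 1 g W) {U : Set E} (hU : IsOpen U) {μ : F}
    (hUW : ∀ x ∈ closure U, (x, μ) ∈ W) {L : ℝ} (hL : 0 ≤ L)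
    (hlip : ∀ x ∈ U, ∀ y ∈ U, ‖g (x, μ) - g (y, μ)‖ ≤ L * ‖x - y‖) :
    ∀ x ∈ closure U, ‖(fderiv 𝕜 g (x, μ)).comp (inl 𝕜 E F)‖ ≤ L := by
  have hslice : ContinuousOn (fun x : E => fderiv 𝕜 g (x, μ)) (closure U) :=
    (hg.continuousOn_fderiv_of_isOpen hW le_rfl).comp
      (continuous_id.prodMk continuous_const).continuousOn hUW
  refine le_on_closure (fun y hy => ?_) (hslice.clm_comp continuousOn_const).norm
    continuousOn_const
  have hyW : (y, μ) ∈ W := hUW y (subset_closure hy)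
  have hD : HasFDerivAt (fun x => g (x, μ)) ((fderiv 𝕜 g (y, μ)).comp (inl 𝕜 E F)) y :=
    ((hg.differentiableOn one_ne_zero).differentiableAt (hW.mem_nhds hyW)).hasFDerivAt.comp y
      (hasFDerivAt_prodMk_left y μ)
  refine hD.le_of_lip' hL ?_
  filter_upwards [hU.mem_nhds hy] with x hx using hlip x hx y hy

theorem hasFDerivAt_of_eventually_fixedPoint {g : E × F → E} {D : E × F →L[𝕜] E} {x : F → E}
    {μ₀ : F} (hg : HasFDerivAt g D (x μ₀, μ₀)) (hunit : IsUnit (1 - D.comp (inl 𝕜 E F)))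
    (hfix : ∀ᶠ μ in 𝓝 μ₀, g (x μ, μ) = x μ)
    (hx : (fun μ => x μ - x μ₀) =O[𝓝 μ₀] (fun μ => μ - μ₀)) :
    HasFDerivAt x ((Ring.inverse (1 - D.comp (inl 𝕜 E F))).comp (D.comp (inr 𝕜 E F))) μ₀ := by
  set A := D.comp (inl 𝕜 E F)
  set N := Ring.inverse (1 - A)
  have hpair : (fun μ => ((x μ, μ) : E × F) - (x μ₀, μ₀)) =O[𝓝 μ₀] (fun μ => μ - μ₀) :=
    hx.prod_left (isBigO_refl _ _)
  have hcont : Tendsto (fun μ => ((x μ, μ) : E × F)) (𝓝 μ₀) (𝓝 (x μ₀, μ₀)) := by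
    simpa using (hpair.trans_tendsto (tendsto_sub_nhds_zero_iff.2 tendsto_id)).add_const
      ((x μ₀, μ₀) : E × F)
  have hrem : (fun μ => N (g (x μ, μ) - g (x μ₀, μ₀) - D ((x μ, μ) - (x μ₀, μ₀))))
      =o[𝓝 μ₀] (fun μ => μ - μ₀) :=
    (N.isBigO_comp _ _).trans_isLittleO ((hg.isLittleO.comp_tendsto hcont).trans_isBigO hpair)
  refine HasFDerivAt.of_isLittleO (hrem.congr' ?_ EventuallyEq.rfl)
  filter_upwards [hfix] with μ hμ
  have hsplit : D ((x μ, μ) - (x μ₀, μ₀)) = A (x μ - x μ₀) + D.comp (inr 𝕜 E F) (μ - μ₀) := by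
    rw [comp_apply, comp_apply, ← map_add, inl_apply, inr_apply, Prod.mk_add_mk, add_zero,
      zero_add, Prod.mk_sub_mk]
  -- the remainder is `N ((1 - A)(x μ - x μ₀) - B (μ - μ₀))`, and `N (1 - A) = 1`
  rw [hμ, hfix.self_of_nhds, hsplit, ← sub_sub, map_sub]
  congr 1
  calc N (x μ - x μ₀ - A (x μ - x μ₀)) = (N * (1 - A)) (x μ - x μ₀) := rfl
    _ = x μ - x μ₀ := by rw [Ring.inverse_mul_cancel _ hunit]; rfl

theorem isBigO_fixedPoint_sub_of_contraction {g : E × F → E} {x : F → E} {μ₀ : F} {L : ℝ}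
    (hL1 : L < 1) (hgμ : DifferentiableAt 𝕜 (fun μ => g (x μ₀, μ)) μ₀)
    (hfix : ∀ᶠ μ in 𝓝 μ₀, g (x μ, μ) = x μ)
    (hcontr : ∀ᶠ μ in 𝓝 μ₀, ‖g (x μ, μ) - g (x μ₀, μ)‖ ≤ L * ‖x μ - x μ₀‖) :
    (fun μ => x μ - x μ₀) =O[𝓝 μ₀] (fun μ => μ - μ₀) := by
  refine IsBigO.trans ?_ hgμ.hasFDerivAt.isBigO_sub
  refine IsBigO.of_bound (1 - L)⁻¹ ?_
  filter_upwards [hfix, hcontr] with μ hμ hμL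
  have hdecomp : x μ - x μ₀ = (g (x μ, μ) - g (x μ₀, μ)) + (g (x μ₀, μ) - g (x μ₀, μ₀)) := by
    rw [hμ, hfix.self_of_nhds]
    abel
  have hle : ‖x μ - x μ₀‖ ≤ L * ‖x μ - x μ₀‖ + ‖g (x μ₀, μ) - g (x μ₀, μ₀)‖ := by
    calc ‖x μ - x μ₀‖ ≤ ‖g (x μ, μ) - g (x μ₀, μ)‖ + ‖g (x μ₀, μ) - g (x μ₀, μ₀)‖ := by
          rw [hdecomp]; exact norm_add_le _ _
      _ ≤ _ := by gcongr
  rw [inv_mul_eq_div, le_div_iff₀ (sub_pos.2 hL1)]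
  linarith

theorem hasFDerivAt_fixedPoint_of_contraction {g : E × F → E} {D : E × F →L[𝕜] E} {x : F → E}
    {μ₀ : F} {L : ℝ} (hL1 : L < 1) (hg : HasFDerivAt g D (x μ₀, μ₀))
    (hunit : IsUnit (1 - D.comp (inl 𝕜 E F))) (hfix : ∀ᶠ μ in 𝓝 μ₀, g (x μ, μ) = x μ)
    (hcontr : ∀ᶠ μ in 𝓝 μ₀, ‖g (x μ, μ) - g (x μ₀, μ)‖ ≤ L * ‖x μ - x μ₀‖) :
    HasFDerivAt x ((Ring.inverse (1 - D.comp (inl 𝕜 E F))).comp (D.comp (inr 𝕜 E F))) μ₀ :=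
  hasFDerivAt_of_eventually_fixedPoint hg hunit hfix <|
    isBigO_fixedPoint_sub_of_contraction hL1
      (hg.comp μ₀ (hasFDerivAt_prodMk_right (x μ₀) μ₀)).differentiableAt hfix hcontr

end Normed

theorem ContinuousOn.ringInverse {X R : Type*} [TopologicalSpace X] [NormedRing R]
    [HasSummableGeomSeries R] {f : X → R} {s : Set X} (hf : ContinuousOn f s)
    (hunit : ∀ x ∈ s, IsUnit (f x)) : ContinuousOn (fun x => Ring.inverse (f x)) s := by
  intro x hx
  obtain ⟨u, hu⟩ := hunit x hx
  exact (hu ▸ NormedRing.inverse_continuousAt u).comp_continuousWithinAt (hf x hx)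

theorem stmt_17_general {E F : Type*} [NormedAddCommGroup E] [NormedSpace ℝ E] [CompleteSpace E]
    [NormedAddCommGroup F] [NormedSpace ℝ F]
    (U : Set E) (hU : IsOpen U)
    (Λ : Set F) (hΛ : IsOpen Λ)
    (W : Set (E × F)) (hW : IsOpen W) (hWsub : (closure U) ×ˢ Λ ⊆ W)
    (g : E × F → E) (hg : ContDiffOn ℝ 1 g W)
    (L : ℝ) (hL0 : 0 < L) (hL1 : L < 1)
    (hcontr : ∀ μ ∈ Λ, ∀ x ∈ closure U, ∀ y ∈ closure U,
      ‖g (x, μ) - g (y, μ)‖ ≤ L * ‖x - y‖)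
    (xfix : F → E)
    (hfix : ∀ μ ∈ Λ, xfix μ ∈ closure U ∧ g (xfix μ, μ) = xfix μ) :
    (∀ μ ∈ Λ, ‖(fderiv ℝ g (xfix μ, μ)).comp (inl ℝ E F)‖ ≤ L) ∧
    (∀ μ ∈ Λ, IsUnit (1 - (fderiv ℝ g (xfix μ, μ)).comp (inl ℝ E F))) ∧
    (∀ μ ∈ Λ, HasFDerivAt xfix
      ((Ring.inverse (1 - (fderiv ℝ g (xfix μ, μ)).comp (inl ℝ E F))).comp
        ((fderiv ℝ g (xfix μ, μ)).comp (inr ℝ E F))) μ) ∧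
    ContinuousOn (fun μ =>
      (Ring.inverse (1 - (fderiv ℝ g (xfix μ, μ)).comp (inl ℝ E F))).comp
        ((fderiv ℝ g (xfix μ, μ)).comp (inr ℝ E F))) Λ := by
  have hmemW : ∀ μ ∈ Λ, ∀ x ∈ closure U, (x, μ) ∈ W := fun μ hμ x hx => hWsub ⟨hx, hμ⟩
  have hdiff : ∀ p ∈ W, HasFDerivAt g (fderiv ℝ g p) p := fun p hp =>
    ((hg.differentiableOn one_ne_zero).differentiableAt (hW.mem_nhds hp)).hasFDerivAt
  have hnorm : ∀ μ ∈ Λ, ‖(fderiv ℝ g (xfix μ, μ)).comp (inl ℝ E F)‖ ≤ L := fun μ hμ =>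
    norm_fderiv_comp_inl_le_of_lipschitz hW hg hU (hmemW μ hμ) hL0.le
      (fun x hx y hy => hcontr μ hμ x (subset_closure hx) y (subset_closure hy)) _ (hfix μ hμ).1
  have hunit : ∀ μ ∈ Λ, IsUnit (1 - (fderiv ℝ g (xfix μ, μ)).comp (inl ℝ E F)) := fun μ hμ =>
    ⟨Units.oneSub _ ((hnorm μ hμ).trans_lt hL1), rfl⟩
  have hderiv : ∀ μ ∈ Λ, HasFDerivAt xfix
      ((Ring.inverse (1 - (fderiv ℝ g (xfix μ, μ)).comp (inl ℝ E F))).comp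
        ((fderiv ℝ g (xfix μ, μ)).comp (inr ℝ E F))) μ := by
    intro μ₀ hμ₀
    have hΛnhds : ∀ᶠ μ in 𝓝 μ₀, μ ∈ Λ := hΛ.eventually_mem hμ₀
    exact hasFDerivAt_fixedPoint_of_contraction hL1 (hdiff _ (hmemW μ₀ hμ₀ _ (hfix μ₀ hμ₀).1))
      (hunit μ₀ hμ₀) (hΛnhds.mono fun μ hμ => (hfix μ hμ).2)
      (hΛnhds.mono fun μ hμ => hcontr μ hμ _ (hfix μ hμ).1 _ (hfix μ₀ hμ₀).1)
  refine ⟨hnorm, hunit, hderiv, ?_⟩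
  have hxfix : ContinuousOn xfix Λ := fun μ hμ => (hderiv μ hμ).continuousAt.continuousWithinAt
  have hDg : ContinuousOn (fun μ => fderiv ℝ g (xfix μ, μ)) Λ :=
    (hg.continuousOn_fderiv_of_isOpen hW le_rfl).comp (hxfix.prodMk continuousOn_id)
      (fun μ hμ => hmemW μ hμ _ (hfix μ hμ).1)
  exact ((continuousOn_const.sub (hDg.clm_comp continuousOn_const)).ringInverse hunit).clm_comp
    (hDg.clm_comp continuousOn_const)

/-- Differentiable dependence of fixed points: if `g` is `C¹` on an open set
containing `closure U ×ˢ Λ` and a uniform contraction in the first variable,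
then `μ ↦ x_μ` is continuously differentiable on `Λ` with derivative
`(I - D_x g(x_μ, μ))⁻¹ ∘ D_λ g(x_μ, μ)` (the inverse exists since
`‖D_x g(x_μ,μ)‖ ≤ L < 1`). -/
theorem stmt_17 {E F : Type*} [NormedAddCommGroup E] [NormedSpace ℝ E] [CompleteSpace E]
    [NormedAddCommGroup F] [NormedSpace ℝ F] [CompleteSpace F]
    (U : Set E) (hU : IsOpen U) (hUne : U.Nonempty)
    (Λ : Set F) (hΛ : IsOpen Λ) (hΛne : Λ.Nonempty)
    (W : Set (E × F)) (hW : IsOpen W) (hWsub : (closure U) ×ˢ Λ ⊆ W)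
    (g : E × F → E) (hg : ContDiffOn ℝ 1 g W)
    (hmaps : ∀ x ∈ closure U, ∀ μ ∈ Λ, g (x, μ) ∈ closure U)
    (L : ℝ) (hL0 : 0 < L) (hL1 : L < 1)
    (hcontr : ∀ μ ∈ Λ, ∀ x ∈ closure U, ∀ y ∈ closure U,
      ‖g (x, μ) - g (y, μ)‖ ≤ L * ‖x - y‖)
    (xfix : F → E)
    (hfix : ∀ μ ∈ Λ, xfix μ ∈ closure U ∧ g (xfix μ, μ) = xfix μ) :
    (∀ μ ∈ Λ, ‖(fderiv ℝ g (xfix μ, μ)).comp (inl ℝ E F)‖ ≤ L) ∧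
    (∀ μ ∈ Λ, IsUnit (1 - (fderiv ℝ g (xfix μ, μ)).comp (inl ℝ E F))) ∧
    (∀ μ ∈ Λ, HasFDerivAt xfix
      ((Ring.inverse (1 - (fderiv ℝ g (xfix μ, μ)).comp (inl ℝ E F))).comp
        ((fderiv ℝ g (xfix μ, μ)).comp (inr ℝ E F))) μ) ∧
    ContinuousOn (fun μ =>
      (Ring.inverse (1 - (fderiv ℝ g (xfix μ, μ)).comp (inl ℝ E F))).comp
        ((fderiv ℝ g (xfix μ, μ)).comp (inr ℝ E F))) Λ :=
  stmt_17_general U hU Λ hΛ W hW hWsub g hg L hL0 hL1 hcontr xfix hfix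
end

section
/- Separately continuous slope function in finite dimensions: Let f : U → ℝ^m be differentiable on an open set U ⊆ ℝ^n (with the Euclidean norm). For distinct x, y ∈ U (with suitable points remaining in U), set v₁ := (y-x)/‖y-x‖ and extend to an orthonormal basis (v₁,…,vₙ) of ℝ^n, and define Φ(x,y) ∈ L(ℝ^n, ℝ^m) by Φ(x,y)v_k := (f(x + ‖y-x‖v_k) - f(x))/‖y-x‖, with Φ(x,x) := Df(x). Then Φ(x,y)(y-x) = f(y) - f(x), and Φ is separately continuous at every diagonal point: for each x, Φ(x,y) → Df(x) as y → x, and for each y, Φ(x,y) → Df(y) as x → y. -/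
/-!
With `t = ‖y - x‖`, the map `Φ x y - Df c` (for `c = x` or `c = y`) sends `v k` to
`t⁻¹ (f (x + t v k) - f x) - Df c (v k)`. Both `x` and `x + t v k` lie within `2t` of `c`, so
comparing each value of `f` with its linearisation at `c` makes this at most `3δ` once `t` is so
small that the first-order error near `c` is at most `δ` times the distance. An operator bounded
by `C` on an orthonormal basis of `ℝⁿ` has norm at most `n C`. The slope identity is the column
`k = 1`, since `x + t v₁ = y`.
-/

open Filter Topology

namespace ContinuousLinearMap

variable {ι E F : Type*} [Fintype ι] [NormedAddCommGroup E] [InnerProductSpace ℝ E]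
  [NormedAddCommGroup F] [NormedSpace ℝ F]

theorem opNorm_le_card_mul_of_orthonormalBasis (b : OrthonormalBasis ι ℝ E) (A : E →L[ℝ] F)
    {C : ℝ} (hC : 0 ≤ C) (h : ∀ i, ‖A (b i)‖ ≤ C) : ‖A‖ ≤ Fintype.card ι * C := by
  refine A.opNorm_le_bound (by positivity) fun u => ?_
  calc ‖A u‖ = ‖∑ i, inner ℝ (b i) u • A (b i)‖ := by
        conv_lhs => rw [← b.sum_repr' u]
        simp only [map_sum, map_smul]
    _ ≤ ∑ _i : ι, ‖u‖ * C := by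
        refine (norm_sum_le _ _).trans (Finset.sum_le_sum fun i _ => ?_)
        have hcoord : |inner ℝ (b i) u| ≤ ‖u‖ := by
          simpa [b.norm_eq_one] using abs_real_inner_le_norm (b i) u
        rw [norm_smul, Real.norm_eq_abs]
        exact mul_le_mul hcoord (h i) (norm_nonneg _) (norm_nonneg _)
    _ = Fintype.card ι * C * ‖u‖ := by
        rw [Finset.sum_const, Finset.card_univ, nsmul_eq_mul]; ring

theorem opNorm_le_card_mul_of_orthonormal [FiniteDimensional ℝ E] {v : ι → E}
    (hv : Orthonormal ℝ v) (hcard : Fintype.card ι = Module.finrank ℝ E) (A : E →L[ℝ] F)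
    {C : ℝ} (hC : 0 ≤ C) (h : ∀ i, ‖A (v i)‖ ≤ C) : ‖A‖ ≤ Fintype.card ι * C := by
  let b := OrthonormalBasis.mk hv (hv.linearIndependent.span_eq_top_of_card_eq_finrank' hcard).ge
  exact opNorm_le_card_mul_of_orthonormalBasis b A hC (by simpa [b] using h)

end ContinuousLinearMap

section DifferenceQuotient

variable {E F : Type*} [NormedAddCommGroup E] [NormedSpace ℝ E]
  [NormedAddCommGroup F] [NormedSpace ℝ F]

theorem norm_slope_sub_le (f : E → F) (L : E →L[ℝ] F) (c x w : E) {t : ℝ} (ht : 0 < t) :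
    ‖t⁻¹ • (f (x + t • w) - f x) - L w‖ ≤
      t⁻¹ * (‖f (x + t • w) - f c - L (x + t • w - c)‖ + ‖f x - f c - L (x - c)‖) := by
  have hrem : t⁻¹ • (f (x + t • w) - f x) - L w =
      t⁻¹ • ((f (x + t • w) - f c - L (x + t • w - c)) - (f x - f c - L (x - c))) := by
    rw [show (f (x + t • w) - f c - L (x + t • w - c)) - (f x - f c - L (x - c)) =
        (f (x + t • w) - f x) - t • L w by simp only [map_sub, map_add, map_smul]; abel,
      smul_sub t⁻¹ (f (x + t • w) - f x), smul_smul, inv_mul_cancel₀ ht.ne', one_smul]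
  rw [hrem, norm_smul, Real.norm_of_nonneg (inv_nonneg.2 ht.le)]
  exact mul_le_mul_of_nonneg_left (norm_sub_le _ _) (inv_nonneg.2 ht.le)

theorem HasFDerivAt.exists_norm_slope_sub_le {f : E → F} {L : E →L[ℝ] F} {c : E}
    (hf : HasFDerivAt f L c) {ε : ℝ} (hε : 0 < ε) :
    ∃ r > 0, ∀ x w t, ‖w‖ ≤ 1 → 0 < t → t < r → ‖x - c‖ ≤ t →
      ‖t⁻¹ • (f (x + t • w) - f x) - L w‖ ≤ ε := by
  obtain ⟨r, hr, hlin⟩ :=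
    Metric.eventually_nhds_iff.1 (hf.isLittleO.def (by positivity : 0 < ε / 3))
  refine ⟨r / 2, by positivity, fun x w t hw ht htr hxc => ?_⟩
  have hzc : ‖x + t • w - c‖ ≤ 2 * t := by
    calc ‖x + t • w - c‖ = ‖(x - c) + t • w‖ := by rw [add_sub_right_comm]
      _ ≤ ‖x - c‖ + t * ‖w‖ :=
          (norm_add_le _ _).trans_eq (by rw [norm_smul, Real.norm_of_nonneg ht.le])
      _ ≤ 2 * t := by nlinarith
  have hz := hlin (show dist (x + t • w) c < r by rw [dist_eq_norm]; linarith)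
  have hx := hlin (show dist x c < r by rw [dist_eq_norm]; linarith)
  calc ‖t⁻¹ • (f (x + t • w) - f x) - L w‖
      ≤ t⁻¹ * (ε / 3 * ‖x + t • w - c‖ + ε / 3 * ‖x - c‖) :=
        (norm_slope_sub_le f L c x w ht).trans
          (mul_le_mul_of_nonneg_left (add_le_add hz hx) (inv_nonneg.2 ht.le))
    _ ≤ t⁻¹ * (ε / 3 * (2 * t) + ε / 3 * t) := by gcongr
    _ = ε := by field_simp; ring

end DifferenceQuotient

section SlopeFunction

variable {ι E F : Type*} [NormedAddCommGroup E] [InnerProductSpace ℝ E]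
  [NormedAddCommGroup F] [NormedSpace ℝ F]
  {f : E → F} {v : E → E → ι → E} {Φ : E → E → E →L[ℝ] F}

theorem slope_apply_sub (k₀ : ι) (hv₀ : ∀ x y, x ≠ y → v x y k₀ = ‖y - x‖⁻¹ • (y - x))
    (hΦ : ∀ x y, x ≠ y → ∀ k, Φ x y (v x y k) = ‖y - x‖⁻¹ • (f (x + ‖y - x‖ • v x y k) - f x))
    (x y : E) : Φ x y (y - x) = f y - f x := by
  rcases eq_or_ne x y with rfl | hxy
  · simp
  have ht : ‖y - x‖ ≠ 0 := norm_ne_zero_iff.2 (sub_ne_zero.2 hxy.symm)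
  have hy : ‖y - x‖ • v x y k₀ = y - x := by
    rw [hv₀ x y hxy, smul_smul, mul_inv_cancel₀ ht, one_smul]
  rw [← hy, map_smul, hΦ x y hxy, smul_smul, mul_inv_cancel₀ ht, one_smul, hy, add_sub_cancel]

variable [Fintype ι] [FiniteDimensional ℝ E]

theorem HasFDerivAt.exists_norm_slope_sub_lt (hv : ∀ x y, x ≠ y → Orthonormal ℝ (v x y))
    (hcard : Fintype.card ι = Module.finrank ℝ E)
    (hΦ : ∀ x y, x ≠ y → ∀ k, Φ x y (v x y k) = ‖y - x‖⁻¹ • (f (x + ‖y - x‖ • v x y k) - f x))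
    {L : E →L[ℝ] F} {c : E} (hf : HasFDerivAt f L c) {ε : ℝ} (hε : 0 < ε) :
    ∃ r > 0, ∀ x y, x ≠ y → ‖y - x‖ < r → ‖x - c‖ ≤ ‖y - x‖ → ‖Φ x y - L‖ < ε := by
  set N : ℝ := (Fintype.card ι : ℝ)
  obtain ⟨r, hr, hslope⟩ := hf.exists_norm_slope_sub_le (by positivity : 0 < ε / (N + 1))
  refine ⟨r, hr, fun x y hxy hyx hxc => ?_⟩
  have ht : 0 < ‖y - x‖ := norm_pos_iff.2 (sub_ne_zero.2 hxy.symm)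
  calc ‖Φ x y - L‖ ≤ N * (ε / (N + 1)) := by
        refine ContinuousLinearMap.opNorm_le_card_mul_of_orthonormal (hv x y hxy) hcard _
          (by positivity) fun k => ?_
        rw [sub_apply, hΦ x y hxy k]
        exact hslope x _ _ ((hv x y hxy).1 k).le ht hyx hxc
    _ < ε := by
        rw [mul_div_assoc', div_lt_iff₀ (by positivity)]
        nlinarith

theorem tendsto_slope_right (hv : ∀ x y, x ≠ y → Orthonormal ℝ (v x y))
    (hcard : Fintype.card ι = Module.finrank ℝ E)
    (hΦ : ∀ x y, x ≠ y → ∀ k, Φ x y (v x y k) = ‖y - x‖⁻¹ • (f (x + ‖y - x‖ • v x y k) - f x))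
    {L : E →L[ℝ] F} {x : E} (hf : HasFDerivAt f L x) (hdiag : Φ x x = L) :
    Tendsto (fun y => Φ x y) (𝓝 x) (𝓝 L) := by
  refine Metric.tendsto_nhds.2 fun ε hε => ?_
  obtain ⟨r, hr, hΦL⟩ := hf.exists_norm_slope_sub_lt hv hcard hΦ hε
  filter_upwards [Metric.ball_mem_nhds x hr] with y hy
  rcases eq_or_ne x y with rfl | hxy
  · simpa [hdiag] using hε
  rw [dist_eq_norm]
  exact hΦL x y hxy (by rwa [← dist_eq_norm]) (by simp)

theorem tendsto_slope_left (hv : ∀ x y, x ≠ y → Orthonormal ℝ (v x y))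
    (hcard : Fintype.card ι = Module.finrank ℝ E)
    (hΦ : ∀ x y, x ≠ y → ∀ k, Φ x y (v x y k) = ‖y - x‖⁻¹ • (f (x + ‖y - x‖ • v x y k) - f x))
    {L : E →L[ℝ] F} {y : E} (hf : HasFDerivAt f L y) (hdiag : Φ y y = L) :
    Tendsto (fun x => Φ x y) (𝓝 y) (𝓝 L) := by
  refine Metric.tendsto_nhds.2 fun ε hε => ?_
  obtain ⟨r, hr, hΦL⟩ := hf.exists_norm_slope_sub_lt hv hcard hΦ hε
  filter_upwards [Metric.ball_mem_nhds y hr] with x hx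
  rcases eq_or_ne x y with rfl | hxy
  · simpa [hdiag] using hε
  rw [dist_eq_norm]
  exact hΦL x y hxy (by rwa [← dist_eq_norm, dist_comm]) (norm_sub_rev x y).le

end SlopeFunction

theorem stmt_18_general {n m : ℕ} (hn : 0 < n)
    (U : Set (EuclideanSpace ℝ (Fin n)))
    (f : EuclideanSpace ℝ (Fin n) → EuclideanSpace ℝ (Fin m))
    (f' : EuclideanSpace ℝ (Fin n) →
      (EuclideanSpace ℝ (Fin n) →L[ℝ] EuclideanSpace ℝ (Fin m)))
    (hf : ∀ c ∈ U, HasFDerivAt f (f' c) c)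
    (v : EuclideanSpace ℝ (Fin n) → EuclideanSpace ℝ (Fin n) →
      Fin n → EuclideanSpace ℝ (Fin n))
    (hvON : ∀ x y, x ≠ y → Orthonormal ℝ (v x y))
    (hv1 : ∀ x y, x ≠ y → v x y ⟨0, hn⟩ = ‖y - x‖⁻¹ • (y - x))
    (Φ : EuclideanSpace ℝ (Fin n) → EuclideanSpace ℝ (Fin n) →
      (EuclideanSpace ℝ (Fin n) →L[ℝ] EuclideanSpace ℝ (Fin m)))
    (hΦdef : ∀ x y, x ≠ y → ∀ k : Fin n,
      Φ x y (v x y k) = ‖y - x‖⁻¹ • (f (x + ‖y - x‖ • v x y k) - f x))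
    (hΦdiag : ∀ x, Φ x x = f' x) :
    (∀ x y, Φ x y (y - x) = f y - f x) ∧
    (∀ x ∈ U, Tendsto (fun y => Φ x y) (𝓝 x) (𝓝 (f' x))) ∧
    (∀ y ∈ U, Tendsto (fun x => Φ x y) (𝓝 y) (𝓝 (f' y))) := by
  have hcard : Fintype.card (Fin n) = Module.finrank ℝ (EuclideanSpace ℝ (Fin n)) := by simp
  exact ⟨slope_apply_sub _ hv1 hΦdef,
    fun x hx => tendsto_slope_right hvON hcard hΦdef (hf x hx) (hΦdiag x),
    fun y hy => tendsto_slope_left hvON hcard hΦdef (hf y hy) (hΦdiag y)⟩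

/-- A separately continuous slope function in finite dimensions: given, for each
pair of distinct points `x, y`, an orthonormal basis `v x y` of `ℝⁿ` with first
vector `(y-x)/‖y-x‖`, and `Φ` defined by
`Φ x y (v x y k) = (f (x + ‖y-x‖ • v x y k) - f x)/‖y-x‖` (with `Φ x x = Df x`),
`Φ` satisfies the slope identity and is separately continuous at every diagonal
point of `U`. -/
theorem stmt_18 {n m : ℕ} (hn : 0 < n)
    (U : Set (EuclideanSpace ℝ (Fin n))) (hU : IsOpen U)
    (f : EuclideanSpace ℝ (Fin n) → EuclideanSpace ℝ (Fin m))
    (f' : EuclideanSpace ℝ (Fin n) →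
      (EuclideanSpace ℝ (Fin n) →L[ℝ] EuclideanSpace ℝ (Fin m)))
    (hf : ∀ c ∈ U, HasFDerivAt f (f' c) c)
    (v : EuclideanSpace ℝ (Fin n) → EuclideanSpace ℝ (Fin n) →
      Fin n → EuclideanSpace ℝ (Fin n))
    (hvON : ∀ x y, x ≠ y → Orthonormal ℝ (v x y))
    (hv1 : ∀ x y, x ≠ y → v x y ⟨0, hn⟩ = ‖y - x‖⁻¹ • (y - x))
    (Φ : EuclideanSpace ℝ (Fin n) → EuclideanSpace ℝ (Fin n) →
      (EuclideanSpace ℝ (Fin n) →L[ℝ] EuclideanSpace ℝ (Fin m)))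
    (hΦdef : ∀ x y, x ≠ y → ∀ k : Fin n,
      Φ x y (v x y k) = ‖y - x‖⁻¹ • (f (x + ‖y - x‖ • v x y k) - f x))
    (hΦdiag : ∀ x, Φ x x = f' x) :
    (∀ x y, Φ x y (y - x) = f y - f x) ∧
    (∀ x ∈ U, Tendsto (fun y => Φ x y) (𝓝 x) (𝓝 (f' x))) ∧
    (∀ y ∈ U, Tendsto (fun x => Φ x y) (𝓝 y) (𝓝 (f' y))) :=
  stmt_18_general hn U f f' hf v hvON hv1 Φ hΦdef hΦdiag
end
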